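/- For every ε ∈ [0,1] and every n ≥ 1, the n-stage repeated matching pennies game has an (ε + 2/n)-Nash equilibrium in which each player's strategy has Shannon entropy at most (1-ε)·n. -/

import Mathlib

/-- A mixed strategy over a finite action set. -/
def IsMixed {α : Type} [Fintype α] (σ : α → ℝ) : Prop :=
  (∀ a, 0 ≤ σ a) ∧ ∑ a, σ a = 1

/-- The pure (point-mass) strategy on action `a`. -/
def pureS {α : Type} [DecidableEq α] (a : α) : α → ℝ := fun b => if b = a then 1 else 0

/-- Expected payoff in a two-player game under a mixed strategy profile. -/
def expU2 {A1 A2 : Type} [Fintype A1] [Fintype A2] (u : A1 → A2 → ℝ)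
    (σ₁ : A1 → ℝ) (σ₂ : A2 → ℝ) : ℝ :=
  ∑ a, ∑ b, σ₁ a * σ₂ b * u a b

/-- Nash equilibrium of the two-player game with payoffs `u1` (row) and `u2` (column). -/
def IsNash2 {A1 A2 : Type} [Fintype A1] [Fintype A2] (u1 u2 : A1 → A2 → ℝ)
    (σ₁ : A1 → ℝ) (σ₂ : A2 → ℝ) : Prop :=
  IsMixed σ₁ ∧ IsMixed σ₂ ∧
  (∀ τ, IsMixed τ → expU2 u1 τ σ₂ ≤ expU2 u1 σ₁ σ₂) ∧
  (∀ τ, IsMixed τ → expU2 u2 σ₁ τ ≤ expU2 u2 σ₁ σ₂)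

/-- `v` is the minmax payoff of the row player: the least payoff the column player can
force on the row player (who best-responds with a pure action). -/
def RowMinmax {A1 A2 : Type} [Fintype A1] [Fintype A2] [Nonempty A1]
    (u1 : A1 → A2 → ℝ) (v : ℝ) : Prop :=
  IsLeast {x : ℝ | ∃ σ₂ : A2 → ℝ, IsMixed σ₂ ∧
    x = Finset.univ.sup' Finset.univ_nonempty (fun a₁ : A1 => ∑ b, σ₂ b * u1 a₁ b)} v

/-- `v` is the minmax payoff of the column player. -/
def ColMinmax {A1 A2 : Type} [Fintype A1] [Fintype A2] [Nonempty A2]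
    (u2 : A1 → A2 → ℝ) (v : ℝ) : Prop :=
  IsLeast {x : ℝ | ∃ σ₁ : A1 → ℝ, IsMixed σ₁ ∧
    x = Finset.univ.sup' Finset.univ_nonempty (fun a₂ : A2 => ∑ a, σ₁ a * u2 a a₂)} v

/-- Probability that, starting from history `h`, play under the behavioral profile
`(σ₁, σ₂)` follows exactly the sequence of action profiles `l`. -/
def hp2 {A1 A2 : Type} (σ₁ : List (A1 × A2) → A1 → ℝ) (σ₂ : List (A1 × A2) → A2 → ℝ) :
    List (A1 × A2) → List (A1 × A2) → ℝ
  | _, [] => 1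
  | h, a :: rest => σ₁ h a.1 * σ₂ h a.2 * hp2 σ₁ σ₂ (h ++ [a]) rest

/-- Expected average payoff (with stage payoff `u`) in the `n`-stage repeated game. -/
noncomputable def avgPay2 {A1 A2 : Type} [Fintype A1] [Fintype A2] (n : ℕ)
    (u : A1 → A2 → ℝ) (σ₁ : List (A1 × A2) → A1 → ℝ) (σ₂ : List (A1 × A2) → A2 → ℝ) : ℝ :=
  ∑ f : Fin n → A1 × A2, hp2 σ₁ σ₂ [] (List.ofFn f) * ((∑ t, u (f t).1 (f t).2) / n)

/-- ε-Nash equilibrium of the `n`-stage repeated two-player game with stage payoffs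
`u1` (row) and `u2` (column), behavioral strategies and average payoffs. -/
def IsEpsRepNash2 {A1 A2 : Type} [Fintype A1] [Fintype A2] (n : ℕ) (ε : ℝ)
    (u1 u2 : A1 → A2 → ℝ)
    (σ₁ : List (A1 × A2) → A1 → ℝ) (σ₂ : List (A1 × A2) → A2 → ℝ) : Prop :=
  (∀ h, IsMixed (σ₁ h)) ∧ (∀ h, IsMixed (σ₂ h)) ∧
  (∀ τ, (∀ h, IsMixed (τ h)) → avgPay2 n u1 τ σ₂ ≤ avgPay2 n u1 σ₁ σ₂ + ε) ∧
  (∀ τ, (∀ h, IsMixed (τ h)) → avgPay2 n u2 σ₁ τ ≤ avgPay2 n u2 σ₁ σ₂ + ε)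

/-- Nash equilibrium of the `n`-stage repeated two-player game. -/
def IsRepNash2 {A1 A2 : Type} [Fintype A1] [Fintype A2] (n : ℕ)
    (u1 u2 : A1 → A2 → ℝ)
    (σ₁ : List (A1 × A2) → A1 → ℝ) (σ₂ : List (A1 × A2) → A2 → ℝ) : Prop :=
  (∀ h, IsMixed (σ₁ h)) ∧ (∀ h, IsMixed (σ₂ h)) ∧
  (∀ τ, (∀ h, IsMixed (τ h)) → avgPay2 n u1 τ σ₂ ≤ avgPay2 n u1 σ₁ σ₂) ∧
  (∀ τ, (∀ h, IsMixed (τ h)) → avgPay2 n u2 σ₁ τ ≤ avgPay2 n u2 σ₁ σ₂)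

/-- Shannon entropy (base 2) of a mixed strategy, with the convention 0·log 0 = 0. -/
noncomputable def ent {α : Type} [Fintype α] (σ : α → ℝ) : ℝ :=
  ∑ a, -(σ a * Real.logb 2 (σ a))

/-- Shannon entropy of a behavioral strategy in the `n`-stage repeated two-player game:
the maximum over terminal histories of the summed stage entropies along the prefixes. -/
noncomputable def repEnt2 {A1 A2 α : Type} [Fintype A1] [Fintype A2] [Fintype α]
    [Nonempty A1] [Nonempty A2] (n : ℕ) (σ : List (A1 × A2) → α → ℝ) : ℝ :=
  Finset.univ.sup' Finset.univ_nonempty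
    (fun f : Fin n → A1 × A2 => ∑ t : Fin n, ent (σ ((List.ofFn f).take t)))

/-- Row payoff in matching pennies: 1 on a match, -1 on a mismatch. -/
def mpU : Bool → Bool → ℝ := fun a b => if a = b then 1 else -1


/-! Both players randomise uniformly for the first `k = ⌊(1-ε)n⌋` stages and then follow a fixed
pure sequence (row `H` forever, column `T, H, T, H, …`). In matching pennies any strategy earns
expected payoff `0` against a uniformly randomising opponent, so a deviator can gain only in the
last `n - k ≤ εn + 1` stages, at most `1` per stage; on path the pure tail gives the row player a
total of `-1` or `0`, so both equilibrium average payoffs lie within `1/n` of `0`. A uniform stage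
costs one bit of entropy and a pure stage none, so each strategy has entropy at most `k`. -/

open Finset

theorem Fintype.sum_fin_succ_pi {β M : Type} [Fintype β] [AddCommMonoid M] (m : ℕ)
    (F : (Fin (m + 1) → β) → M) :
    ∑ f : Fin (m + 1) → β, F f = ∑ a : β, ∑ g : Fin m → β, F (Fin.cons a g) := by
  rw [← Fintype.sum_prod_type (f := fun p : β × (Fin m → β) => F (Fin.cons p.1 p.2))]
  exact (Fintype.sum_equiv (Fin.consEquiv fun _ => β) _ _ fun p => rfl).symm

theorem sum_range_succ_shift {M : Type} [AddCommMonoid M] (c : ℕ → M) (l m : ℕ) :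
    ∑ i ∈ range (m + 1), c (l + i) = c l + ∑ i ∈ range m, c (l + 1 + i) := by
  rw [sum_range_succ', add_comm]
  simp only [add_zero, add_assoc, add_comm 1]

theorem sum_range_ite_lt (a b : ℝ) (k n : ℕ) :
    ∑ i ∈ range n, (if i < k then a else b) = (min n k : ℕ) * a + (n - k : ℕ) * b := by
  induction n with
  | zero => simp
  | succ n ih =>
    rw [sum_range_succ, ih]
    rcases lt_or_ge n k with hnk | hnk
    · rw [if_pos hnk, show min (n + 1) k = min n k + 1 by omega, show n + 1 - k = n - k by omega]
      push_cast; ring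
    · rw [if_neg (not_lt.2 hnk), show min (n + 1) k = min n k by omega,
        show n + 1 - k = n - k + 1 by omega]
      push_cast; ring

section StageGame

variable {A1 A2 : Type} [Fintype A1] [Fintype A2]

theorem expU2_add (u v : A1 → A2 → ℝ) (σ₁ : A1 → ℝ) (σ₂ : A2 → ℝ) :
    expU2 (fun a b => u a b + v a b) σ₁ σ₂ = expU2 u σ₁ σ₂ + expU2 v σ₁ σ₂ := by
  simp only [expU2, mul_add, sum_add_distrib]

theorem expU2_neg (u : A1 → A2 → ℝ) (σ₁ : A1 → ℝ) (σ₂ : A2 → ℝ) :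
    expU2 (fun a b => -u a b) σ₁ σ₂ = -expU2 u σ₁ σ₂ := by
  simp only [expU2, mul_neg, sum_neg_distrib]

theorem expU2_const {σ₁ : A1 → ℝ} {σ₂ : A2 → ℝ} (hσ₁ : IsMixed σ₁) (hσ₂ : IsMixed σ₂)
    (c : ℝ) : expU2 (fun _ _ => c) σ₁ σ₂ = c := by
  simp only [expU2, ← sum_mul, ← mul_sum, hσ₁.2, hσ₂.2, one_mul]

theorem expU2_le_of_forall_le {u : A1 → A2 → ℝ} {σ₁ : A1 → ℝ} {σ₂ : A2 → ℝ} {c : ℝ}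
    (hσ₁ : IsMixed σ₁) (hσ₂ : IsMixed σ₂) (hu : ∀ a b, u a b ≤ c) : expU2 u σ₁ σ₂ ≤ c := by
  calc expU2 u σ₁ σ₂ ≤ expU2 (fun _ _ => c) σ₁ σ₂ :=
        sum_le_sum fun a _ => sum_le_sum fun b _ =>
          mul_le_mul_of_nonneg_left (hu a b) (mul_nonneg (hσ₁.1 a) (hσ₂.1 b))
    _ = c := expU2_const hσ₁ hσ₂ c

theorem expU2_pureS [DecidableEq A1] [DecidableEq A2] (u : A1 → A2 → ℝ) (a : A1) (b : A2) :
    expU2 u (pureS a) (pureS b) = u a b := by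
  simp [expU2, pureS]

end StageGame

section RepeatedGame

variable {A1 A2 : Type}

theorem hp2_ofFn_cons {σ₁ : List (A1 × A2) → A1 → ℝ} {σ₂ : List (A1 × A2) → A2 → ℝ}
    (h : List (A1 × A2)) (a : A1 × A2) {m : ℕ} (g : Fin m → A1 × A2) :
    hp2 σ₁ σ₂ h (List.ofFn (Fin.cons a g)) =
      σ₁ h a.1 * σ₂ h a.2 * hp2 σ₁ σ₂ (h ++ [a]) (List.ofFn g) := by
  simp [List.ofFn_succ, hp2]

variable [Fintype A1] [Fintype A2]

theorem avgPay2_neg (n : ℕ) (u : A1 → A2 → ℝ) (σ₁ : List (A1 × A2) → A1 → ℝ)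
    (σ₂ : List (A1 × A2) → A2 → ℝ) :
    avgPay2 n (fun a b => -u a b) σ₁ σ₂ = -avgPay2 n u σ₁ σ₂ := by
  simp only [avgPay2, sum_neg_distrib, neg_div, mul_neg]

theorem repEnt2_le_sum [Nonempty A1] [Nonempty A2] {α : Type} [Fintype α] (n : ℕ)
    {σ : List (A1 × A2) → α → ℝ} {e : ℕ → ℝ} (he : ∀ h, ent (σ h) ≤ e h.length) :
    repEnt2 n σ ≤ ∑ t ∈ range n, e t := by
  refine sup'_le _ _ fun f _ => ?_
  rw [← Fin.sum_univ_eq_sum_range]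
  refine sum_le_sum fun t _ => ?_
  simpa [t.2.le] using he ((List.ofFn f).take t)

/-- Expected total payoff of the `m` stages that follow history `h`. -/
noncomputable def contPay2 (u : A1 → A2 → ℝ) (σ₁ : List (A1 × A2) → A1 → ℝ)
    (σ₂ : List (A1 × A2) → A2 → ℝ) : ℕ → List (A1 × A2) → ℝ
  | 0, _ => 0
  | m + 1, h => expU2 (fun a b => u a b + contPay2 u σ₁ σ₂ m (h ++ [(a, b)])) (σ₁ h) (σ₂ h)

variable {u : A1 → A2 → ℝ} {σ₁ : List (A1 × A2) → A1 → ℝ} {σ₂ : List (A1 × A2) → A2 → ℝ}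

theorem contPay2_le_sum (hσ₁ : ∀ h, IsMixed (σ₁ h)) (hσ₂ : ∀ h, IsMixed (σ₂ h))
    {c : ℕ → ℝ} (hc : ∀ h, expU2 u (σ₁ h) (σ₂ h) ≤ c h.length) (m : ℕ) (h : List (A1 × A2)) :
    contPay2 u σ₁ σ₂ m h ≤ ∑ i ∈ range m, c (h.length + i) := by
  induction m generalizing h with
  | zero => simp [contPay2]
  | succ m ih =>
    have hnext : expU2 (fun a b => contPay2 u σ₁ σ₂ m (h ++ [(a, b)])) (σ₁ h) (σ₂ h) ≤
        ∑ i ∈ range m, c (h.length + 1 + i) :=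
      expU2_le_of_forall_le (hσ₁ h) (hσ₂ h) fun a b => by simpa using ih (h ++ [(a, b)])
    rw [contPay2, expU2_add, sum_range_succ_shift]
    exact add_le_add (hc h) hnext

theorem contPay2_eq_sum (hσ₁ : ∀ h, IsMixed (σ₁ h)) (hσ₂ : ∀ h, IsMixed (σ₂ h))
    {c : ℕ → ℝ} (hc : ∀ h, expU2 u (σ₁ h) (σ₂ h) = c h.length) (m : ℕ) (h : List (A1 × A2)) :
    contPay2 u σ₁ σ₂ m h = ∑ i ∈ range m, c (h.length + i) := by
  induction m generalizing h with
  | zero => simp [contPay2]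
  | succ m ih =>
    have hnext : (fun a b => contPay2 u σ₁ σ₂ m (h ++ [(a, b)])) =
        fun _ _ => ∑ i ∈ range m, c (h.length + 1 + i) := by
      funext a b; simpa using ih (h ++ [(a, b)])
    rw [contPay2, expU2_add, hnext, expU2_const (hσ₁ h) (hσ₂ h), hc, sum_range_succ_shift]

theorem sum_hp2_ofFn (hσ₁ : ∀ h, IsMixed (σ₁ h)) (hσ₂ : ∀ h, IsMixed (σ₂ h)) (m : ℕ)
    (h : List (A1 × A2)) : ∑ f : Fin m → A1 × A2, hp2 σ₁ σ₂ h (List.ofFn f) = 1 := by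
  induction m generalizing h with
  | zero => simp [hp2]
  | succ m ih =>
    simp only [Fintype.sum_fin_succ_pi, hp2_ofFn_cons, ← mul_sum, ih, mul_one]
    rw [Fintype.sum_prod_type, ← sum_mul_sum, (hσ₁ h).2, (hσ₂ h).2, mul_one]

theorem sum_hp2_ofFn_mul_sum_eq_contPay2 (hσ₁ : ∀ h, IsMixed (σ₁ h))
    (hσ₂ : ∀ h, IsMixed (σ₂ h)) (m : ℕ) (h : List (A1 × A2)) :
    ∑ f : Fin m → A1 × A2, hp2 σ₁ σ₂ h (List.ofFn f) * ∑ t, u (f t).1 (f t).2 =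
      contPay2 u σ₁ σ₂ m h := by
  induction m generalizing h with
  | zero => simp [contPay2]
  | succ m ih =>
    have hpath (a : A1 × A2) :
        ∑ g : Fin m → A1 × A2, hp2 σ₁ σ₂ h (List.ofFn (Fin.cons a g)) *
          ∑ t, u ((Fin.cons a g : Fin (m + 1) → A1 × A2) t).1
            ((Fin.cons a g : Fin (m + 1) → A1 × A2) t).2 =
        σ₁ h a.1 * σ₂ h a.2 * (u a.1 a.2 + contPay2 u σ₁ σ₂ m (h ++ [a])) := by
      simp only [hp2_ofFn_cons, Fin.sum_univ_succ, Fin.cons_zero, Fin.cons_succ, mul_assoc,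
        ← mul_sum, mul_add, sum_add_distrib, ← sum_mul, sum_hp2_ofFn hσ₁ hσ₂, one_mul, ih]
    rw [Fintype.sum_fin_succ_pi, sum_congr rfl fun a _ => hpath a, Fintype.sum_prod_type]
    rfl

theorem avgPay2_eq_contPay2_div (hσ₁ : ∀ h, IsMixed (σ₁ h)) (hσ₂ : ∀ h, IsMixed (σ₂ h))
    (n : ℕ) : avgPay2 n u σ₁ σ₂ = contPay2 u σ₁ σ₂ n [] / n := by
  simp only [avgPay2, mul_div_assoc', ← sum_div, sum_hp2_ofFn_mul_sum_eq_contPay2 hσ₁ hσ₂]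

end RepeatedGame

section MatchingPennies

noncomputable def uniformBool : Bool → ℝ := fun _ => 1 / 2

theorem isMixed_uniformBool : IsMixed uniformBool :=
  ⟨fun _ => by norm_num [uniformBool], by norm_num [uniformBool]⟩

theorem isMixed_pureS {α : Type} [Fintype α] [DecidableEq α] (a : α) : IsMixed (pureS a) :=
  ⟨fun b => by unfold pureS; split_ifs <;> norm_num, by simp [pureS]⟩

theorem ent_uniformBool : ent uniformBool = 1 := by
  have hlog : Real.logb 2 (1 / 2) = -1 := by
    rw [one_div, Real.logb_inv, Real.logb_self_eq_one one_lt_two]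
  simp only [ent, uniformBool, Fintype.sum_bool, hlog]
  norm_num

theorem ent_pureS {α : Type} [Fintype α] [DecidableEq α] (a : α) : ent (pureS a) = 0 := by
  simp [ent, pureS, apply_ite]

theorem mpU_le_one (a b : Bool) : mpU a b ≤ 1 := by
  unfold mpU; split_ifs <;> norm_num

theorem neg_mpU_le_one (a b : Bool) : -mpU a b ≤ 1 := by
  unfold mpU; split_ifs <;> norm_num

theorem expU2_mpU_uniformBool_right (τ : Bool → ℝ) : expU2 mpU τ uniformBool = 0 := by
  simp [expU2, mpU, uniformBool]

theorem expU2_mpU_uniformBool_left (τ : Bool → ℝ) : expU2 mpU uniformBool τ = 0 := by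
  simp only [expU2, Fintype.sum_bool, mpU, uniformBool, Bool.true_eq_false, Bool.false_eq_true,
    if_true, if_false]
  ring

noncomputable def mpRowStrat (k : ℕ) (h : List (Bool × Bool)) : Bool → ℝ :=
  if h.length < k then uniformBool else pureS true

noncomputable def mpColStrat (k : ℕ) (h : List (Bool × Bool)) : Bool → ℝ :=
  if h.length < k then uniformBool else pureS (decide ((h.length - k) % 2 = 1))

def mpProfilePay (k i : ℕ) : ℝ :=
  if i < k then 0 else if (i - k) % 2 = 1 then 1 else -1

theorem isMixed_mpRowStrat (k : ℕ) (h : List (Bool × Bool)) : IsMixed (mpRowStrat k h) := by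
  unfold mpRowStrat; split_ifs
  exacts [isMixed_uniformBool, isMixed_pureS true]

theorem isMixed_mpColStrat (k : ℕ) (h : List (Bool × Bool)) : IsMixed (mpColStrat k h) := by
  unfold mpColStrat; split_ifs
  exacts [isMixed_uniformBool, isMixed_pureS _]

theorem ent_mpRowStrat_le (k : ℕ) (h : List (Bool × Bool)) :
    ent (mpRowStrat k h) ≤ if h.length < k then 1 else 0 := by
  unfold mpRowStrat; split_ifs <;> simp [ent_uniformBool, ent_pureS]

theorem ent_mpColStrat_le (k : ℕ) (h : List (Bool × Bool)) :
    ent (mpColStrat k h) ≤ if h.length < k then 1 else 0 := by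
  unfold mpColStrat; split_ifs <;> simp [ent_uniformBool, ent_pureS]

theorem expU2_mpU_mpColStrat_le (k : ℕ) {τ : Bool → ℝ} (hτ : IsMixed τ)
    (h : List (Bool × Bool)) :
    expU2 mpU τ (mpColStrat k h) ≤ if h.length < k then 0 else 1 := by
  unfold mpColStrat; split_ifs
  · rw [expU2_mpU_uniformBool_right]
  · exact expU2_le_of_forall_le hτ (isMixed_pureS _) mpU_le_one

theorem expU2_neg_mpU_mpRowStrat_le (k : ℕ) {τ : Bool → ℝ} (hτ : IsMixed τ)
    (h : List (Bool × Bool)) :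
    expU2 (fun a b => -mpU a b) (mpRowStrat k h) τ ≤ if h.length < k then 0 else 1 := by
  unfold mpRowStrat; split_ifs
  · rw [expU2_neg, expU2_mpU_uniformBool_left, neg_zero]
  · exact expU2_le_of_forall_le (isMixed_pureS _) hτ neg_mpU_le_one

theorem expU2_mpU_mpRowStrat_mpColStrat (k : ℕ) (h : List (Bool × Bool)) :
    expU2 mpU (mpRowStrat k h) (mpColStrat k h) = mpProfilePay k h.length := by
  unfold mpRowStrat mpColStrat mpProfilePay; split_ifs
  · exact expU2_mpU_uniformBool_left _
  all_goals simp_all [expU2_pureS, mpU]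

theorem sum_range_mpProfilePay (k n : ℕ) :
    ∑ i ∈ range n, mpProfilePay k i = -(((n - k) % 2 : ℕ) : ℝ) := by
  induction n with
  | zero => simp
  | succ n ih =>
    rw [sum_range_succ, ih, mpProfilePay]
    rcases lt_or_ge n k with hnk | hnk
    · rw [if_pos hnk, show n + 1 - k = n - k by omega, add_zero]
    · rw [if_neg (not_lt.2 hnk), show n + 1 - k = n - k + 1 by omega]
      rcases Nat.mod_two_eq_zero_or_one (n - k) with hpar | hpar
      · rw [if_neg (by omega), show (n - k + 1) % 2 = 1 by omega, hpar]; norm_num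
      · rw [if_pos hpar, show (n - k + 1) % 2 = 0 by omega, hpar]; norm_num

theorem avgPay2_mpProfile (k n : ℕ) :
    avgPay2 n mpU (mpRowStrat k) (mpColStrat k) = -((((n - k) % 2 : ℕ) : ℝ) / n) := by
  rw [avgPay2_eq_contPay2_div (isMixed_mpRowStrat k) (isMixed_mpColStrat k),
    contPay2_eq_sum (isMixed_mpRowStrat k) (isMixed_mpColStrat k)
      (expU2_mpU_mpRowStrat_mpColStrat k)]
  simp [sum_range_mpProfilePay, neg_div]

theorem avgPay2_mpU_le_of_mpColStrat (k n : ℕ) {τ : List (Bool × Bool) → Bool → ℝ}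
    (hτ : ∀ h, IsMixed (τ h)) : avgPay2 n mpU τ (mpColStrat k) ≤ ((n - k : ℕ) : ℝ) / n := by
  rw [avgPay2_eq_contPay2_div hτ (isMixed_mpColStrat k)]
  gcongr
  refine (contPay2_le_sum hτ (isMixed_mpColStrat k) (c := fun i => if i < k then 0 else 1)
    (fun h => expU2_mpU_mpColStrat_le k (hτ h) h) n []).trans_eq ?_
  simp [sum_range_ite_lt]

theorem avgPay2_neg_mpU_le_of_mpRowStrat (k n : ℕ) {τ : List (Bool × Bool) → Bool → ℝ}
    (hτ : ∀ h, IsMixed (τ h)) :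
    avgPay2 n (fun a b => -mpU a b) (mpRowStrat k) τ ≤ ((n - k : ℕ) : ℝ) / n := by
  rw [avgPay2_eq_contPay2_div (isMixed_mpRowStrat k) hτ]
  gcongr
  refine (contPay2_le_sum (isMixed_mpRowStrat k) hτ (c := fun i => if i < k then 0 else 1)
    (fun h => expU2_neg_mpU_mpRowStrat_le k (hτ h) h) n []).trans_eq ?_
  simp [sum_range_ite_lt]

theorem repEnt2_le_of_ent_le (k n : ℕ) {σ : List (Bool × Bool) → Bool → ℝ}
    (hσ : ∀ h, ent (σ h) ≤ if h.length < k then 1 else 0) : repEnt2 n σ ≤ k := by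
  refine (repEnt2_le_sum n (e := fun i => if i < k then 1 else 0) hσ).trans ?_
  rw [sum_range_ite_lt]
  simp

end MatchingPennies

theorem stmt_13 (ε : ℝ) (hε0 : 0 ≤ ε) (hε1 : ε ≤ 1) (n : ℕ) (hn : 1 ≤ n) :
    ∃ σ₁ σ₂ : List (Bool × Bool) → Bool → ℝ,
      IsEpsRepNash2 n (ε + 2 / n) mpU (fun a b => -(mpU a b)) σ₁ σ₂ ∧
      repEnt2 n σ₁ ≤ (1 - ε) * n ∧ repEnt2 n σ₂ ≤ (1 - ε) * n := by
  set k := ⌊(1 - ε) * n⌋₊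
  have hn0 : (0 : ℝ) < n := by exact_mod_cast hn
  have hk : (k : ℝ) ≤ (1 - ε) * n := Nat.floor_le (by nlinarith)
  have htail : ((n - k : ℕ) : ℝ) / n ≤ ε + 1 / n := by
    have hkn : k ≤ n := Nat.floor_le_of_le (by nlinarith)
    have := Nat.lt_floor_add_one ((1 - ε) * n)
    rw [div_le_iff₀ hn0, add_mul, one_div_mul_cancel hn0.ne', Nat.cast_sub hkn]
    linarith
  have hparity : (((n - k) % 2 : ℕ) : ℝ) / n ≤ 1 / n := by
    gcongr
    exact_mod_cast Nat.le_of_lt_succ (Nat.mod_lt _ two_pos)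
  have hparity0 : 0 ≤ (((n - k) % 2 : ℕ) : ℝ) / n := by positivity
  have htwo : (2 : ℝ) / n = 1 / n + 1 / n := by ring
  refine ⟨mpRowStrat k, mpColStrat k, ⟨isMixed_mpRowStrat k, isMixed_mpColStrat k,
    fun τ hτ => ?_, fun τ hτ => ?_⟩, (repEnt2_le_of_ent_le k n (ent_mpRowStrat_le k)).trans hk,
    (repEnt2_le_of_ent_le k n (ent_mpColStrat_le k)).trans hk⟩
  · have := avgPay2_mpU_le_of_mpColStrat k n hτ
    rw [avgPay2_mpProfile]
    linarith
  · have := avgPay2_neg_mpU_le_of_mpRowStrat k n hτ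
    rw [avgPay2_neg n mpU _ (mpColStrat k), avgPay2_mpProfile]
    linarith
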